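/- arXiv:1804.05264 — 2 statements merged into one kernel-verified Lean document; each statement's English description precedes it below -/
import Mathlib

section
/- Assume k is algebraically closed. Let V be a realization of M with normal matrix W and slack matrix S = Vᵀ * W. Then the slack ideal is contained in the cycle ideal: I_M ⊆ C_S; that is, every f ∈ R for which P^N * f ∈ J for some natural number N belongs to C_S. -/
open Classical Matrix MvPolynomial

/-- `V` is a realization of the matroid `M`: a set `I` is independent in `M` iff the
columns of `V` indexed by `I` are linearly independent over `k`. -/
def IsRealization {k : Type*} [Field k] {n d : ℕ} (M : Matroid (Fin n))
    (V : Matrix (Fin (d + 1)) (Fin n) k) : Prop :=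
  ∀ I : Set (Fin n), M.Indep I ↔ LinearIndependent k (fun i : I => Vᵀ (i : Fin n))

/-- `F` is a hyperplane of `M`: a flat of `M` of rank `d`. -/
def IsHyperplane {n : ℕ} (M : Matroid (Fin n)) (d : ℕ) (F : Set (Fin n)) : Prop :=
  M.IsFlat F ∧ ∃ I, M.IsBasis I F ∧ I.ncard = d

/-- `H` is a bijection onto the set of hyperplanes of `M`. -/
def HypEnum {n h : ℕ} (M : Matroid (Fin n)) (d : ℕ) (H : Fin h → Set (Fin n)) : Prop :=
  Function.Injective H ∧ ∀ F : Set (Fin n), (∃ j, H j = F) ↔ IsHyperplane M d F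

/-- `M` has rank `r` : some base of `M` has cardinality `r`. -/
def HasRank {n : ℕ} (M : Matroid (Fin n)) (r : ℕ) : Prop :=
  ∃ B, M.IsBase B ∧ B.ncard = r

/-- `W` is a normal matrix for the realization `V`: the dot product of column `j` of `W`
with column `i` of `V` is zero iff `i ∈ H j`. -/
def IsNormalMatrix {k : Type*} [Field k] {n d h : ℕ} (H : Fin h → Set (Fin n))
    (V : Matrix (Fin (d + 1)) (Fin n) k) (W : Matrix (Fin (d + 1)) (Fin h) k) : Prop :=
  ∀ i j, (∑ r : Fin (d + 1), W r j * V r i) = 0 ↔ i ∈ H j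

/-- Projective equivalence of realizations. -/
def ProjEquiv {k : Type*} [Field k] {n d : ℕ}
    (V V' : Matrix (Fin (d + 1)) (Fin n) k) : Prop :=
  ∃ (A : Matrix (Fin (d + 1)) (Fin (d + 1)) k) (b : Fin n → kˣ),
    IsUnit A ∧ V' = A * V * Matrix.diagonal (fun i => (b i : k))

/-- The index type of slack variables: pairs `(i, j)` with `i ∉ H j`. -/
abbrev SlackVar {n h : ℕ} (H : Fin h → Set (Fin n)) : Type :=
  {p : Fin n × Fin h // p.1 ∉ H p.2}

/-- The symbolic slack matrix of `M`. -/
noncomputable def symbSlack {n h : ℕ} (H : Fin h → Set (Fin n)) (k : Type*) [Field k] :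
    Matrix (Fin n) (Fin h) (MvPolynomial (SlackVar H) k) :=
  fun i j => if hij : i ∈ H j then 0 else X ⟨(i, j), hij⟩

/-- The ideal `J` generated by the `(d+2)`-minors of the symbolic slack matrix. -/
noncomputable def minorIdeal {n h : ℕ} (d : ℕ) (H : Fin h → Set (Fin n)) (k : Type*)
    [Field k] : Ideal (MvPolynomial (SlackVar H) k) :=
  Ideal.span { f | ∃ (r : Fin (d + 2) → Fin n) (c : Fin (d + 2) → Fin h),
    Function.Injective r ∧ Function.Injective c ∧
      f = ((symbSlack H k).submatrix r c).det }

/-- The product `P` of all slack variables. -/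
noncomputable def allVarsProd {n h : ℕ} (H : Fin h → Set (Fin n)) (k : Type*) [Field k] :
    MvPolynomial (SlackVar H) k :=
  ∏ e : SlackVar H, X e

/-- The slack ideal `I_M` : the saturation of `J` at `P`, as a set. -/
noncomputable def slackSet {n h : ℕ} (d : ℕ) (H : Fin h → Set (Fin n)) (k : Type*) [Field k] :
    Set (MvPolynomial (SlackVar H) k) :=
  {f | ∃ N : ℕ, allVarsProd H k ^ N * f ∈ minorIdeal d H k}

/-- The matrix `S(s)` obtained by evaluating the symbolic slack matrix at `s`. -/
noncomputable def slackEval {k : Type*} [Field k] {n h : ℕ} (H : Fin h → Set (Fin n))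
    (s : SlackVar H → k) : Matrix (Fin n) (Fin h) k :=
  fun i j => if hij : i ∈ H j then 0 else s ⟨(i, j), hij⟩

/-- Cyclic successor in `Fin m`. -/
def cycSucc {m : ℕ} (i : Fin m) : Fin m := ⟨(i.val + 1) % m, Nat.mod_lt _ i.pos⟩

/-- The cycle ideal `C_S` of a slack matrix `S`. -/
noncomputable def cycleIdeal {k : Type*} [Field k] {n h : ℕ} (H : Fin h → Set (Fin n))
    (S : Matrix (Fin n) (Fin h) k) : Ideal (MvPolynomial (SlackVar H) k) :=
  Ideal.span { f | ∃ (m : ℕ) (_ : 2 ≤ m) (a : Fin m → Fin n) (b : Fin m → Fin h)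
    (_ : Function.Injective a) (_ : Function.Injective b)
    (h1 : ∀ i, a i ∉ H (b i)) (h2 : ∀ i, a (cycSucc i) ∉ H (b i)),
    f = C (∏ i, S (a (cycSucc i)) (b i)) * ∏ i, X ⟨(a i, b i), h1 i⟩
      - C (∏ i, S (a i) (b i)) * ∏ i, X ⟨(a (cycSucc i), b i), h2 i⟩ }

/-!
Let `ψ : R → k[y_i, z_j]` be the monomial map `x_(i,j) ↦ S i j * y_i * z_j`. It sends a
`(d+2)`-minor of the symbolic slack matrix to a monomial times the corresponding minor of
`S = Vᵀ * W`, which vanishes because `S` factors through `k^(d+1)`; since `ψ P ≠ 0` and the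
target is a domain, the saturation `I_M` lies in `ker ψ`.

Conversely, `ker ψ` is spanned by the binomials `S^β x^α - S^α x^β` with `x^α`, `x^β` of the same
row and column degrees. The exponent matrices of `α` and `β` then have equal row and column sums,
so walking alternately along entries where `α` exceeds `β` and entries where `β` exceeds `α`
closes up into an alternating cycle. Its cycle binomial lies in `C_S` and trading it in strictly
lowers the total excess of `α` over `β`, so induction puts every such binomial in `C_S`.
-/

theorem Finset.exists_lt_of_sum_eq_of_lt {ι M : Type*} [AddCommMonoid M] [LinearOrder M]
    [IsOrderedCancelAddMonoid M] {s : Finset ι} {f g : ι → M}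
    (hfg : ∑ x ∈ s, f x = ∑ x ∈ s, g x) {x₀ : ι} (hx₀ : x₀ ∈ s) (hlt : f x₀ < g x₀) :
    ∃ x ∈ s, g x < f x := by
  by_contra! hle
  exact (Finset.sum_lt_sum hle ⟨x₀, hx₀, hlt⟩).ne hfg

theorem Finsupp.sum_single_one_apply_of_injective {ι α : Type*} [Fintype ι] [DecidableEq α]
    {g : ι → α} (hg : Function.Injective g) (e : α) :
    (∑ t, Finsupp.single (g t) 1 : α →₀ ℕ) e = if e ∈ Set.range g then 1 else 0 := by
  rw [Finsupp.finsetSum_apply]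
  split_ifs with he
  · obtain ⟨t, rfl⟩ := he
    simp [Finsupp.single_apply, hg.eq_iff]
  · exact Finset.sum_eq_zero fun t _ => Finsupp.single_eq_of_ne fun h => he ⟨t, h.symm⟩

theorem Finsupp.sum_tsub_add_tsub_lt {σ : Type*} [Fintype σ] {α β γ δ : σ →₀ ℕ}
    (hγ : ∀ e, γ e ≠ 0 → γ e = 1 ∧ β e < α e) (hδ : ∀ e, δ e ≠ 0 → δ e = 1 ∧ α e < β e)
    (hγ₀ : γ ≠ 0) : ∑ e, ((α - γ + δ) e - β e) < ∑ e, (α e - β e) := by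
  obtain ⟨e₀, he₀⟩ := Finsupp.ne_iff.1 hγ₀
  refine Finset.sum_lt_sum (fun e _ => ?_) ⟨e₀, Finset.mem_univ _, ?_⟩
  all_goals
    simp only [Finsupp.add_apply, Finsupp.tsub_apply]
    grind

theorem Matrix.det_mul_eq_zero_of_card_lt {m p R : Type*} [Fintype m] [Fintype p]
    [DecidableEq m] [Field R] (A : Matrix m p R) (B : Matrix p m R)
    (hcard : Fintype.card p < Fintype.card m) : (A * B).det = 0 := by
  by_contra hdet
  have hunit : IsUnit (A * B) := (isUnit_iff_isUnit_det _).2 (isUnit_iff_ne_zero.2 hdet)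
  have := (rank_of_isUnit _ hunit).symm.trans_le ((rank_mul_le_left A B).trans A.rank_le_card_width)
  omega

section MonomialMap

variable {σ k τ : Type*} [Field k]

noncomputable def binomial (s : σ → k) (p q : MvPolynomial σ k) : MvPolynomial σ k :=
  C (eval s q) * p - C (eval s p) * q

theorem binomial_mul_left_eq (s : σ → k) (r g d q : MvPolynomial σ k) :
    C (eval s d) * binomial s (r * g) q
      = C (eval s q) * r * binomial s g d + C (eval s g) * binomial s (r * d) q := by
  simp only [binomial, eval_mul, C_mul]
  ring

theorem binomial_mem_of_mul_left {I : Ideal (MvPolynomial σ k)} {s : σ → k}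
    {r g d q : MvPolynomial σ k} (hd : eval s d ≠ 0) (hgd : binomial s g d ∈ I)
    (hrdq : binomial s (r * d) q ∈ I) : binomial s (r * g) q ∈ I := by
  have hmem : C (eval s d) * binomial s (r * g) q ∈ I := by
    rw [binomial_mul_left_eq]
    exact add_mem (I.mul_mem_left _ hgd) (I.mul_mem_left _ hrdq)
  simpa [← mul_assoc, ← C_mul, hd] using I.mul_mem_left (C (eval s d)⁻¹) hmem

theorem eval_monomial_one_ne_zero {s : σ → k} (hs : ∀ i, s i ≠ 0) (α : σ →₀ ℕ) :
    eval s (monomial α 1) ≠ 0 := by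
  simp [eval_monomial, Finsupp.prod, Finset.prod_ne_zero_iff, hs]

theorem mem_of_monomialMap_eq_zero (φ : MvPolynomial σ k →ₗ[k] MvPolynomial τ k)
    (μ : (σ →₀ ℕ) → τ →₀ ℕ) {s : σ → k} (hs : ∀ i, s i ≠ 0)
    (hφ : ∀ α, φ (monomial α 1) = monomial (μ α) (eval s (monomial α 1)))
    {I : Ideal (MvPolynomial σ k)}
    (hI : ∀ α β, μ α = μ β → binomial s (monomial α 1) (monomial β 1) ∈ I)
    {f : MvPolynomial σ k} (hf : φ f = 0) : f ∈ I := by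
  set c : (σ →₀ ℕ) → k := fun α => eval s (monomial α 1)
  have hc : ∀ α, c α ≠ 0 := eval_monomial_one_ne_zero hs
  -- `θ` sends `y ^ v` to `x ^ ρ v / c (ρ v)` for a chosen `μ`-preimage `ρ v` of `v`, so that
  -- `g - θ (φ g)` is a combination of binomials and equals `g` on `ker φ`.
  set ρ : (τ →₀ ℕ) → σ →₀ ℕ := Function.invFun μ
  set θ : MvPolynomial τ k →ₗ[k] MvPolynomial σ k :=
    (basisMonomials τ k).constr k fun v => ((c (ρ v))⁻¹ • monomial (ρ v) 1 : MvPolynomial σ k)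
  suffices h : ∀ g, g - θ (φ g) ∈ I by simpa [hf] using h f
  intro g
  induction g using MvPolynomial.induction_on' with
  | monomial α a =>
    have hρ : μ (ρ (μ α)) = μ α := Function.invFun_eq ⟨α, rfl⟩
    have hθφ : θ (φ (monomial α 1)) = c α • (c (ρ (μ α)))⁻¹ • monomial (ρ (μ α)) 1 := by
      rw [hφ, ← mul_one (eval s _), ← smul_eq_mul, ← smul_monomial, map_smul]
      simpa using congrArg (c α • ·) ((basisMonomials τ k).constr_basis k _ (μ α))
    have hbin : monomial α 1 - θ (φ (monomial α 1))
        = C (c (ρ (μ α)))⁻¹ * binomial s (monomial α 1) (monomial (ρ (μ α)) 1) := by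
      rw [hθφ, binomial, mul_sub, ← mul_assoc, ← C_mul, inv_mul_cancel₀ (hc _), C_1, one_mul,
        smul_smul, smul_eq_C_mul, C_mul, mul_comm (C (c α)), mul_assoc]
    have : monomial α a - θ (φ (monomial α a)) = a • (monomial α 1 - θ (φ (monomial α 1))) := by
      rw [smul_sub, ← map_smul θ, ← map_smul φ, smul_monomial, smul_eq_mul, mul_one]
    rw [this, hbin, smul_eq_C_mul]
    exact I.mul_mem_left _ (I.mul_mem_left _ (hI _ _ hρ.symm))
  | add p q hp hq =>
    simpa only [map_add, add_sub_add_comm] using add_mem hp hq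

end MonomialMap

theorem cycSucc_val {m : ℕ} (t : Fin m) :
    (cycSucc t : ℕ) = if (t : ℕ) + 1 = m then 0 else (t : ℕ) + 1 := by
  have := t.isLt
  split_ifs with h
  · simp [cycSucc, h]
  · exact Nat.mod_eq_of_lt (by omega)

theorem cycSucc_bijective {m : ℕ} : Function.Bijective (cycSucc : Fin m → Fin m) := by
  refine Finite.injective_iff_bijective.1 fun t u htu => Fin.ext ?_
  have := congrArg Fin.val htu
  rw [cycSucc_val, cycSucc_val] at this
  split_ifs at this <;> omega

section AlternatingCycle

variable {ι κ : Type*} {A B : Matrix ι κ ℕ}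

structure IsAlternatingCycle (A B : Matrix ι κ ℕ) {m : ℕ} (a : Fin m → ι) (b : Fin m → κ) :
    Prop where
  two_le : 2 ≤ m
  injective_row : Function.Injective a
  injective_col : Function.Injective b
  excess : ∀ t, B (a t) (b t) < A (a t) (b t)
  deficit : ∀ t, A (a (cycSucc t)) (b t) < B (a (cycSucc t)) (b t)

structure IsAlternatingWalk (A B : Matrix ι κ ℕ) (I : ℕ → ι) (J : ℕ → κ) : Prop where
  excess : ∀ t, B (I t) (J t) < A (I t) (J t)
  deficit : ∀ t, A (I (t + 1)) (J t) < B (I (t + 1)) (J t)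

namespace IsAlternatingWalk

variable {I : ℕ → ι} {J : ℕ → κ} (hw : IsAlternatingWalk A B I J)
include hw

theorem isAlternatingCycle_of_segment {o m : ℕ} (hm : 2 ≤ m)
    (hne : ∀ u v, o ≤ u → u < v → v < o + m → I u ≠ I v ∧ J u ≠ J v)
    (hclose : A (I o) (J (o + m - 1)) < B (I o) (J (o + m - 1))) :
    IsAlternatingCycle A B (fun t : Fin m => I (o + t)) (fun t => J (o + t)) where
  two_le := hm
  injective_row := .of_lt_imp_ne fun t u htu => (hne _ _ (by omega) (by simpa) (by omega)).1
  injective_col := .of_lt_imp_ne fun t u htu => (hne _ _ (by omega) (by simpa) (by omega)).2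
  excess t := hw.excess _
  deficit t := by
    have := t.isLt
    simp only [cycSucc_val]
    split_ifs with ht
    · simpa [show o + t = o + m - 1 by omega] using hclose
    · exact hw.deficit _

theorem row_succ_ne (t : ℕ) : I (t + 1) ≠ I t := fun h =>
  lt_asymm (h ▸ hw.deficit t) (hw.excess t)

theorem col_succ_ne (t : ℕ) : J (t + 1) ≠ J t := fun h =>
  lt_asymm (h ▸ hw.excess (t + 1)) (hw.deficit t)

theorem exists_isAlternatingCycle [Finite ι] [Finite κ] :
    ∃ m, ∃ (a : Fin m → ι) (b : Fin m → κ), IsAlternatingCycle A B a b := by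
  have hrep : ∃ v, ∃ u < v, I u = I v ∨ J u = J v := by
    obtain ⟨u, v, huv, h⟩ := Finite.exists_ne_map_eq_of_infinite I
    rcases huv.lt_or_gt with huv | huv
    exacts [⟨v, u, huv, .inl h⟩, ⟨u, v, huv, .inl h.symm⟩]
  set v := Nat.find hrep
  have hmin : ∀ u w, u < w → w < v → I u ≠ I w ∧ J u ≠ J w := fun u w huw hwv =>
    ⟨fun h => Nat.find_min hrep hwv ⟨u, huw, .inl h⟩,
      fun h => Nat.find_min hrep hwv ⟨u, huw, .inr h⟩⟩
  by_cases hrow : ∃ u < v, I u = I v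
  · obtain ⟨u, huv, hrow⟩ := hrow
    have hm : 2 ≤ v - u := by
      by_contra!
      exact hw.row_succ_ne u (by rw [show u + 1 = v by omega, hrow])
    refine ⟨_, _, _, hw.isAlternatingCycle_of_segment (o := u) hm
      (fun x y _ hxy hy => hmin x y hxy (by omega)) ?_⟩
    simpa [hrow, show u + (v - u) - 1 + 1 = v by omega] using hw.deficit (u + (v - u) - 1)
  · push Not at hrow
    obtain ⟨u, huv, hcol⟩ : ∃ u < v, J u = J v := by
      obtain ⟨u, huv, h | h⟩ := Nat.find_spec hrep
      exacts [absurd h (hrow u huv), ⟨u, huv, h⟩]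
    have hm : 2 ≤ v - u := by
      by_contra!
      exact hw.col_succ_ne u (by rw [show u + 1 = v by omega, hcol])
    refine ⟨_, _, _, hw.isAlternatingCycle_of_segment (o := u + 1) hm
      (fun x y hx hxy hy => ?_) ?_⟩
    · obtain hy | rfl := (show y < v ∨ y = v by omega)
      · exact hmin x y hxy hy
      · exact ⟨hrow x hxy, hcol ▸ fun h => (hmin u x (by omega) hxy).2 h.symm⟩
    · simpa [← hcol, show u + 1 + (v - u) - 1 = v by omega] using hw.deficit u

end IsAlternatingWalk

theorem exists_isAlternatingCycle [Fintype ι] [Fintype κ]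
    (hrow : ∀ i, ∑ j, A i j = ∑ j, B i j) (hcol : ∀ j, ∑ i, A i j = ∑ i, B i j) (hne : A ≠ B) :
    ∃ m, ∃ (a : Fin m → ι) (b : Fin m → κ), IsAlternatingCycle A B a b := by
  let P := {p : ι × κ // B p.1 p.2 < A p.1 p.2}
  have hstart : Nonempty P := by
    obtain ⟨i, j, hij⟩ : ∃ i j, A i j ≠ B i j := by
      by_contra! h
      exact hne (Matrix.ext h)
    obtain hlt | hlt := hij.lt_or_gt
    · obtain ⟨j', -, hj'⟩ := Finset.exists_lt_of_sum_eq_of_lt (hrow i) (Finset.mem_univ j) hlt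
      exact ⟨⟨(i, j'), hj'⟩⟩
    · exact ⟨⟨(i, j), hlt⟩⟩
  have hstep : ∀ p : P, ∃ q : P, A q.1.1 p.1.2 < B q.1.1 p.1.2 := fun ⟨(i, j), hij⟩ => by
    obtain ⟨i', -, hi'⟩ :=
      Finset.exists_lt_of_sum_eq_of_lt (hcol j).symm (Finset.mem_univ i) hij
    obtain ⟨j', -, hj'⟩ := Finset.exists_lt_of_sum_eq_of_lt (hrow i') (Finset.mem_univ j) hi'
    exact ⟨⟨(i', j'), hj'⟩, hi'⟩
  choose next hnext using hstep
  let walk : ℕ → P := fun t => next^[t] (Classical.choice hstart)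
  refine IsAlternatingWalk.exists_isAlternatingCycle (I := fun t => (walk t).1.1)
    (J := fun t => (walk t).1.2) ⟨fun t => (walk t).2, fun t => ?_⟩
  simpa only [walk, Function.iterate_succ_apply'] using hnext (walk t)

end AlternatingCycle

noncomputable section

variable {k : Type*} [Field k] {n h : ℕ} {H : Fin h → Set (Fin n)}

def slackWeight (e : SlackVar H) : Fin n ⊕ Fin h →₀ ℕ :=
  Finsupp.single (Sum.inl e.1.1) 1 + Finsupp.single (Sum.inr e.1.2) 1

def slackDegree : (SlackVar H →₀ ℕ) →ₗ[ℕ] Fin n ⊕ Fin h →₀ ℕ :=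
  Finsupp.linearCombination ℕ slackWeight

def slackExponents (α : SlackVar H →₀ ℕ) : Matrix (Fin n) (Fin h) ℕ :=
  fun i j => if hij : i ∈ H j then 0 else α ⟨(i, j), hij⟩

theorem slackExponents_apply_slackVar (α : SlackVar H →₀ ℕ) (e : SlackVar H) :
    slackExponents α e.1.1 e.1.2 = α e :=
  dif_neg e.2

theorem sum_slackVar {M : Type*} [AddCommMonoid M] (F : Fin n → Fin h → M)
    (hF : ∀ i j, i ∈ H j → F i j = 0) :
    ∑ e : SlackVar H, F e.1.1 e.1.2 = ∑ i, ∑ j, F i j := by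
  rw [← Fintype.sum_prod_type',
    ← Fintype.sum_subtype_add_sum_subtype fun p : Fin n × Fin h => p.1 ∉ H p.2,
    Fintype.sum_eq_zero (fun p : {p : Fin n × Fin h // ¬p.1 ∉ H p.2} => F p.1.1 p.1.2)
      fun p => hF _ _ (not_not.1 p.2), add_zero]

theorem slackDegree_apply (α : SlackVar H →₀ ℕ) (x : Fin n ⊕ Fin h) :
    slackDegree α x = ∑ e, α e * slackWeight e x := by
  rw [slackDegree, Finsupp.linearCombination_apply, Finsupp.sum_apply,
    Finsupp.sum_fintype _ _ (by simp)]
  rfl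

theorem slackDegree_inl (α : SlackVar H →₀ ℕ) (i : Fin n) :
    slackDegree α (Sum.inl i) = ∑ j, slackExponents α i j := calc
  _ = ∑ e : SlackVar H, if e.1.1 = i then slackExponents α e.1.1 e.1.2 else 0 := by
    simp [slackDegree_apply, slackWeight, Finsupp.single_apply, slackExponents_apply_slackVar]
  _ = ∑ i', ∑ j, if i' = i then slackExponents α i' j else 0 :=
    sum_slackVar (fun i' j => if i' = i then slackExponents α i' j else 0) fun i' j h => by
      simp [slackExponents, h]
  _ = _ := by simp

theorem slackDegree_inr (α : SlackVar H →₀ ℕ) (j : Fin h) :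
    slackDegree α (Sum.inr j) = ∑ i, slackExponents α i j := calc
  _ = ∑ e : SlackVar H, if e.1.2 = j then slackExponents α e.1.1 e.1.2 else 0 := by
    simp [slackDegree_apply, slackWeight, Finsupp.single_apply, slackExponents_apply_slackVar]
  _ = ∑ i, ∑ j', if j' = j then slackExponents α i j' else 0 :=
    sum_slackVar (fun i j' => if j' = j then slackExponents α i j' else 0) fun i j' h => by
      simp [slackExponents, h]
  _ = _ := by simp

def slackMonomialMap (s : SlackVar H → k) :
    MvPolynomial (SlackVar H) k →ₐ[k] MvPolynomial (Fin n ⊕ Fin h) k :=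
  aeval fun e => monomial (slackWeight e) (s e)

theorem slackMonomialMap_monomial (s : SlackVar H → k) (α : SlackVar H →₀ ℕ) :
    slackMonomialMap s (monomial α 1) = monomial (slackDegree α) (eval s (monomial α 1)) := by
  rw [slackMonomialMap, aeval_monomial, eval_monomial, slackDegree,
    Finsupp.linearCombination_apply, Finsupp.sum, Finsupp.prod, Finsupp.prod, map_one, one_mul,
    one_mul, monomial_sum_prod]
  simp only [monomial_pow]

def slackEntries (S : Matrix (Fin n) (Fin h) k) (e : SlackVar H) : k := S e.1.1 e.1.2

theorem slackMonomialMap_symbSlack {S : Matrix (Fin n) (Fin h) k}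
    (hS : ∀ i j, i ∈ H j → S i j = 0) (i : Fin n) (j : Fin h) :
    slackMonomialMap (slackEntries S) (symbSlack H k i j)
      = X (Sum.inr j) * (X (Sum.inl i) * C (S i j)) := by
  by_cases hij : i ∈ H j
  · simp [symbSlack, hij, hS i j hij]
  · rw [symbSlack, dif_neg hij, slackMonomialMap, aeval_X, slackWeight, slackEntries,
      monomial_add_single, ← C_mul_X_pow_eq_monomial]
    simp only [pow_one]
    ring

theorem slackMonomialMap_det_submatrix_symbSlack {m : Type*} [Fintype m] [DecidableEq m]
    {S : Matrix (Fin n) (Fin h) k} (hS : ∀ i j, i ∈ H j → S i j = 0) (r : m → Fin n)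
    (c : m → Fin h) :
    slackMonomialMap (slackEntries S) ((symbSlack H k).submatrix r c).det
      = (∏ t, X (Sum.inr (c t))) * ((∏ t, X (Sum.inl (r t))) * C (S.submatrix r c).det) := by
  rw [AlgHom.map_det, RingHom.map_det C, ← det_mul_column, ← det_mul_row]
  congr 1
  ext t u
  simp [slackMonomialMap_symbSlack hS]

theorem slackMonomialMap_eq_zero_of_mem_slackSet {d : ℕ} {S : Matrix (Fin n) (Fin h) k}
    (hS : ∀ i j, S i j = 0 ↔ i ∈ H j)
    (hdet : ∀ (r : Fin (d + 2) → Fin n) (c : Fin (d + 2) → Fin h), (S.submatrix r c).det = 0)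
    {f : MvPolynomial (SlackVar H) k} (hf : f ∈ slackSet d H k) :
    slackMonomialMap (slackEntries S) f = 0 := by
  obtain ⟨N, hN⟩ := hf
  have hJ : minorIdeal d H k ≤ RingHom.ker (slackMonomialMap (slackEntries S)) := by
    rw [minorIdeal, Ideal.span_le]
    rintro _ ⟨r, c, -, -, rfl⟩
    simp [slackMonomialMap_det_submatrix_symbSlack (fun i j => (hS i j).2), hdet]
  have hP : slackMonomialMap (slackEntries S) (allVarsProd H k) ≠ 0 := by
    simp [allVarsProd, Finset.prod_ne_zero_iff, slackMonomialMap, slackEntries, hS]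
  have := hJ hN
  rw [RingHom.mem_ker, map_mul, map_pow] at this
  exact (mul_eq_zero.1 this).resolve_left (pow_ne_zero _ hP)

theorem exists_lt_of_slackExponents_lt {α β : SlackVar H →₀ ℕ} {i : Fin n} {j : Fin h}
    (h : slackExponents β i j < slackExponents α i j) :
    ∃ hij : i ∉ H j, β ⟨(i, j), hij⟩ < α ⟨(i, j), hij⟩ := by
  by_cases hij : i ∈ H j
  · simp [slackExponents, hij] at h
  · exact ⟨hij, by simpa [slackExponents, hij] using h⟩

variable (S : Matrix (Fin n) (Fin h) k)

theorem binomial_prod_X_mem_cycleIdeal {m : ℕ} (hm : 2 ≤ m) {a : Fin m → Fin n}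
    {b : Fin m → Fin h} (ha : Function.Injective a) (hb : Function.Injective b)
    (h₁ : ∀ t, a t ∉ H (b t)) (h₂ : ∀ t, a (cycSucc t) ∉ H (b t)) :
    binomial (slackEntries S) (∏ t, X ⟨(a t, b t), h₁ t⟩)
      (∏ t, X ⟨(a (cycSucc t), b t), h₂ t⟩) ∈ cycleIdeal H S :=
  Ideal.subset_span ⟨m, hm, a, b, ha, hb, h₁, h₂, by simp [binomial, slackEntries]⟩

theorem exists_cycle_exponents {α β : SlackVar H →₀ ℕ} (hdeg : slackDegree α = slackDegree β)
    (hne : α ≠ β) :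
    ∃ γ δ : SlackVar H →₀ ℕ,
      binomial (slackEntries S) (monomial γ 1) (monomial δ 1) ∈ cycleIdeal H S ∧
      slackDegree γ = slackDegree δ ∧ γ ≤ α ∧
      ∑ e, ((α - γ + δ) e - β e) < ∑ e, (α e - β e) := by
  obtain ⟨m, a, b, hcyc⟩ := exists_isAlternatingCycle (A := slackExponents α)
    (B := slackExponents β) (by simp [← slackDegree_inl, hdeg])
    (by simp [← slackDegree_inr, hdeg]) fun hAB => hne <| Finsupp.ext fun e => by
      rw [← slackExponents_apply_slackVar α, hAB, slackExponents_apply_slackVar]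
  choose h₁ hgα using fun t => exists_lt_of_slackExponents_lt (hcyc.excess t)
  choose h₂ hdβ using fun t => exists_lt_of_slackExponents_lt (hcyc.deficit t)
  set g : Fin m → SlackVar H := fun t => ⟨(a t, b t), h₁ t⟩
  set d : Fin m → SlackVar H := fun t => ⟨(a (cycSucc t), b t), h₂ t⟩
  have hg : Function.Injective g := fun t u htu => hcyc.injective_row congr($htu.1.1)
  have hd : Function.Injective d := fun t u htu => hcyc.injective_col congr($htu.1.2)
  set γ : SlackVar H →₀ ℕ := ∑ t, Finsupp.single (g t) 1
  set δ : SlackVar H →₀ ℕ := ∑ t, Finsupp.single (d t) 1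
  have hγ : ∀ e, γ e ≠ 0 → γ e = 1 ∧ β e < α e := fun e => by
    rw [Finsupp.sum_single_one_apply_of_injective hg]
    split_ifs with he
    · obtain ⟨t, rfl⟩ := he
      exact fun _ => ⟨rfl, hgα t⟩
    · exact absurd rfl
  have hδ : ∀ e, δ e ≠ 0 → δ e = 1 ∧ α e < β e := fun e => by
    rw [Finsupp.sum_single_one_apply_of_injective hd]
    split_ifs with he
    · obtain ⟨t, rfl⟩ := he
      exact fun _ => ⟨rfl, hdβ t⟩
    · exact absurd rfl
  have hγ₀ : γ ≠ 0 := fun h0 => by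
    have hm : 0 < m := by have := hcyc.two_le; omega
    simpa [h0, γ] using Finsupp.sum_single_one_apply_of_injective hg (g ⟨0, hm⟩)
  refine ⟨γ, δ, ?_, ?_, fun e => ?_, Finsupp.sum_tsub_add_tsub_lt hγ hδ hγ₀⟩
  · rw [monomial_sum_one, monomial_sum_one]
    exact binomial_prod_X_mem_cycleIdeal S hcyc.two_le
      hcyc.injective_row hcyc.injective_col h₁ h₂
  · simp only [map_sum, slackDegree, Finsupp.linearCombination_single, one_smul, slackWeight,
      Finset.sum_add_distrib, γ, δ, g, d]
    rw [cycSucc_bijective.sum_comp fun t => Finsupp.single (Sum.inl (a t)) 1]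
  · have := hγ e
    omega

variable {S}

theorem binomial_monomial_mem_cycleIdeal (hS : ∀ e : SlackVar H, slackEntries S e ≠ 0)
    {α β : SlackVar H →₀ ℕ} (hdeg : slackDegree α = slackDegree β) :
    binomial (slackEntries S) (monomial α 1) (monomial β 1) ∈ cycleIdeal H S := by
  induction hD : ∑ e, (α e - β e) using Nat.strong_induction_on generalizing α with
  | _ D ih =>
  obtain rfl | hne := eq_or_ne α β
  · simp [binomial]
  obtain ⟨γ, δ, hγδ, hdeg', hγα, hlt⟩ := exists_cycle_exponents S hdeg hne
  rw [← tsub_add_cancel_of_le hγα, ← mul_one 1, ← monomial_mul]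
  refine binomial_mem_of_mul_left (eval_monomial_one_ne_zero hS δ) hγδ ?_
  rw [monomial_mul, mul_one]
  refine ih _ (hD ▸ hlt) ?_ rfl
  rw [map_add, ← hdeg', ← map_add, tsub_add_cancel_of_le hγα, hdeg]

theorem mem_cycleIdeal_of_slackMonomialMap_eq_zero (hS : ∀ e : SlackVar H, slackEntries S e ≠ 0)
    {f : MvPolynomial (SlackVar H) k} (hf : slackMonomialMap (slackEntries S) f = 0) :
    f ∈ cycleIdeal H S :=
  mem_of_monomialMap_eq_zero (slackMonomialMap _).toLinearMap slackDegree hS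
    (slackMonomialMap_monomial _) (fun _ _ => binomial_monomial_mem_cycleIdeal hS) hf

end

theorem stmt14_general {k : Type*} [Field k] {n d h : ℕ} (H : Fin h → Set (Fin n))
    (V : Matrix (Fin (d + 1)) (Fin n) k) (W : Matrix (Fin (d + 1)) (Fin h) k)
    (hW : IsNormalMatrix H V W) :
    ∀ f ∈ slackSet d H k, f ∈ cycleIdeal H (Vᵀ * W) := by
  have hS : ∀ i j, (Vᵀ * W) i j = 0 ↔ i ∈ H j := fun i j => by
    rw [← hW, mul_apply]
    simp [mul_comm]
  intro f hf
  refine mem_cycleIdeal_of_slackMonomialMap_eq_zero (fun e => (hS _ _).not.2 e.2) ?_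
  refine slackMonomialMap_eq_zero_of_mem_slackSet hS (fun r c => ?_) hf
  rw [submatrix_mul _ _ _ id _ Function.bijective_id]
  exact det_mul_eq_zero_of_card_lt _ _ (by simp)

/-- over an algebraically closed field, the slack ideal is contained in the
cycle ideal of any realization. -/
theorem stmt14 {k : Type*} [Field k] [IsAlgClosed k] {n d h : ℕ} (M : Matroid (Fin n))
    (hE : M.E = Set.univ) (hrk : HasRank M (d + 1))
    (H : Fin h → Set (Fin n)) (hH : HypEnum M d H)
    (V : Matrix (Fin (d + 1)) (Fin n) k) (hV : IsRealization M V)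
    (W : Matrix (Fin (d + 1)) (Fin h) k) (hW : IsNormalMatrix H V W) :
    ∀ f ∈ slackSet d H k, f ∈ cycleIdeal H (Vᵀ * W) :=
  stmt14_general H V W hW
end

section
/- Let S : Matrix (Fin n) (Fin h) k satisfy S i j = 0 ↔ i ∈ H j for all i, j. Let F ⊆ Fin n × Fin h be a set of index pairs with i ∉ H j for every (i, j) ∈ F, and suppose F is acyclic: there is no cycle datum (m, a, b) such that (a k', b k') ∈ F and (a (k'+1), b k') ∈ F for every k' : Fin m. Then there exist units d_r : Fin n → kˣ and d_c : Fin h → kˣ such that (d_r i : k) * S i j * (d_c j : k) = 1 for every (i, j) ∈ F; that is, the rows and columns of S can be scaled so that all entries indexed by a spanning forest of the non-incidence graph equal 1. -/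
open Classical Matrix MvPolynomial

/-! Think of `F ⊆ α × β` as the edge set of a bipartite graph on `α ⊕ β`. If every edge of a
finite `F` had a further edge at both of its endpoints, one could walk forever without
backtracking, and the shortest gap between two visits of the same vertex closes a cycle. So a
finite acyclic `F` has an edge with an endpoint of degree one; scaling the rest of `F` first, the
row or column of that endpoint is still free and can be used to make the entry of that edge `1`. -/

section BipartiteCycle

variable {α β : Type*}

/-- The cycle `a 0, b 0, a 1, b 1, …, b (m - 1), a 0` in the bipartite graph on `α ⊕ β` with
edge set `F`. -/
def HasBipartiteCycle (F : Set (α × β)) : Prop :=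
  ∃ m, 2 ≤ m ∧ ∃ (a : Fin m → α) (b : Fin m → β), Function.Injective a ∧
    Function.Injective b ∧ (∀ i, (a i, b i) ∈ F) ∧ ∀ i, (a (cycSucc i), b i) ∈ F

theorem HasBipartiteCycle.mono {F G : Set (α × β)} (hFG : F ⊆ G) (hF : HasBipartiteCycle F) :
    HasBipartiteCycle G := by
  obtain ⟨m, hm, a, b, ha, hb, hab, hab'⟩ := hF
  exact ⟨m, hm, a, b, ha, hb, fun i => hFG (hab i), fun i => hFG (hab' i)⟩

variable {F : Set (α × β)} {r : ℕ → α} {c : ℕ → β}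

theorem hasBipartiteCycle_of_walk (hedge : ∀ t, (r t, c t) ∈ F)
    (hstep : ∀ t, (r (t + 1), c t) ∈ F) {s m : ℕ} (hm : 2 ≤ m)
    (hr : Set.InjOn r (Set.Ico s (s + m))) (hc : Set.InjOn c (Set.Ico s (s + m)))
    (hclose : (r s, c (s + m - 1)) ∈ F) : HasBipartiteCycle F := by
  refine ⟨m, hm, fun i => r (s + i), fun i => c (s + i), ?_, ?_, fun i => hedge _, fun i => ?_⟩
  · intro i j hij
    have := hr (by simp) (by simp) hij
    exact Fin.ext (by omega)
  · intro i j hij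
    have := hc (by simp) (by simp) hij
    exact Fin.ext (by omega)
  · simp only [cycSucc]
    rcases Nat.lt_or_ge (i + 1) m with hlt | hge
    · rw [Nat.mod_eq_of_lt hlt, ← add_assoc]
      exact hstep _
    · rw [show (i : ℕ) + 1 = m by omega, Nat.mod_self, add_zero, show s + i = s + m - 1 by omega]
      exact hclose

theorem injOn_Ico_of_ne_of_lt_add {γ : Type*} {f : ℕ → γ} {g : ℕ}
    (hf : ∀ x y, x < y → y < x + g → f x ≠ f y) (u : ℕ) : Set.InjOn f (Set.Ico u (u + g)) := by
  intro x hx y hy hxy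
  simp only [Set.mem_Ico] at hx hy
  by_contra hne
  rcases Nat.lt_or_gt_of_ne hne with hlt | hlt
  · exact hf x y hlt (by omega) hxy
  · exact hf y x hlt (by omega) hxy.symm

theorem hasBipartiteCycle_of_nonbacktracking_walk (hF : F.Finite) (hedge : ∀ t, (r t, c t) ∈ F)
    (hstep : ∀ t, (r (t + 1), c t) ∈ F) (hr : ∀ t, r (t + 1) ≠ r t) (hc : ∀ t, c (t + 1) ≠ c t) :
    HasBipartiteCycle F := by
  have hgap : ∃ g, 0 < g ∧ ∃ s, r s = r (s + g) ∨ c s = c (s + g) := by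
    have := hF.to_subtype
    obtain ⟨x, y, hxy, hxy'⟩ :=
      Finite.exists_ne_map_eq_of_infinite fun t => (⟨(r t, c t), hedge t⟩ : F)
    have hrxy : r x = r y := congrArg (fun p : F => p.1.1) hxy'
    rcases Nat.lt_or_gt_of_ne hxy with hlt | hlt
    · exact ⟨y - x, by omega, x, .inl (by rwa [Nat.add_sub_cancel' hlt.le])⟩
    · exact ⟨x - y, by omega, y, .inl (by rwa [Nat.add_sub_cancel' hlt.le, eq_comm])⟩
  obtain ⟨hg, s, hs⟩ := Nat.find_spec hgap
  set g := Nat.find hgap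
  have hshorter : ∀ x y, x < y → y < x + g → r x ≠ r y ∧ c x ≠ c y := by
    intro x y hxy hyg
    have hmin := Nat.find_min hgap (show y - x < g by omega)
    simp only [not_and, not_exists, not_or] at hmin
    simpa only [Nat.add_sub_cancel' hxy.le] using hmin (by omega) x
  have hrinj := injOn_Ico_of_ne_of_lt_add (fun x y hxy hyg => (hshorter x y hxy hyg).1)
  have hcinj := injOn_Ico_of_ne_of_lt_add (fun x y hxy hyg => (hshorter x y hxy hyg).2)
  have hg2 : 2 ≤ g := by
    by_contra hlt
    rw [show g = 1 by omega] at hs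
    rcases hs with hs | hs
    · exact hr s hs.symm
    · exact hc s hs.symm
  rcases hs with hs | hs
  · refine hasBipartiteCycle_of_walk hedge hstep hg2 (hrinj s) (hcinj s) ?_
    rw [hs]
    simpa only [Nat.sub_add_cancel (show 1 ≤ s + g by omega)] using hstep (s + g - 1)
  -- A repeated column closes the cycle whose first row is `r (s + 1)`.
  · refine hasBipartiteCycle_of_walk hedge hstep hg2 (hrinj (s + 1)) (hcinj (s + 1)) ?_
    rw [show s + 1 + g - 1 = s + g by omega, ← hs]
    exact hstep s

theorem exists_leaf_of_not_hasBipartiteCycle (hF : F.Finite) (hne : F.Nonempty)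
    (hacyc : ¬ HasBipartiteCycle F) :
    ∃ p ∈ F, (∀ j, (p.1, j) ∈ F → j = p.2) ∨ (∀ i, (i, p.2) ∈ F → i = p.1) := by
  by_contra! hdeg
  obtain ⟨p₀, hp₀⟩ := hne
  have hcol : ∀ p : F, ∃ i, (i, p.1.2) ∈ F ∧ i ≠ p.1.1 := fun p => (hdeg p.1 p.2).2
  have hrow : ∀ p : F, ∃ j, (p.1.1, j) ∈ F ∧ j ≠ p.1.2 := fun p => (hdeg p.1 p.2).1
  choose i hi hi' using hcol
  choose j hj hj' using hrow
  let next : F → F := fun p => ⟨(i p, j ⟨(i p, p.1.2), hi p⟩), hj ⟨(i p, p.1.2), hi p⟩⟩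
  let e : ℕ → F := fun t => next^[t] ⟨p₀, hp₀⟩
  have he : ∀ t, e (t + 1) = next (e t) := fun t => Function.iterate_succ_apply' _ _ _
  refine hacyc (hasBipartiteCycle_of_nonbacktracking_walk (r := fun t => (e t).1.1)
    (c := fun t => (e t).1.2) hF (fun t => (e t).2) (fun t => ?_) (fun t => ?_) (fun t => ?_))
  · simpa only [he] using hi (e t)
  · simpa only [he] using hi' (e t)
  · simpa only [he] using hj' _

end BipartiteCycle

section Scaling

variable {α β G₀ : Type*} [GroupWithZero G₀] {S : Matrix α β G₀} {F : Set (α × β)}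

theorem exists_row_scaling_of_row_leaf {p : α × β} (hp : S p.1 p.2 ≠ 0)
    (hleaf : ∀ j, (p.1, j) ∈ F → j = p.2) (dr : α → G₀ˣ) (dc : β → G₀ˣ)
    (hd : ∀ q ∈ F \ {p}, (dr q.1 : G₀) * S q.1 q.2 * dc q.2 = 1) :
    ∃ dr' : α → G₀ˣ, ∀ q ∈ F, (dr' q.1 : G₀) * S q.1 q.2 * dc q.2 = 1 := by
  refine ⟨Function.update dr p.1 (Units.mk0 _ (mul_ne_zero hp (dc p.2).ne_zero))⁻¹, ?_⟩
  rintro ⟨i, j⟩ hq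
  by_cases hi : i = p.1
  · obtain rfl : (i, j) = p := Prod.ext hi (hleaf j (hi ▸ hq))
    simp only [Function.update_self, Units.val_inv_eq_inv_val, Units.val_mk0]
    rw [mul_assoc, inv_mul_cancel₀ (mul_ne_zero hp (dc j).ne_zero)]
  · rw [Function.update_of_ne hi]
    exact hd _ ⟨hq, fun h => hi (congrArg Prod.fst h)⟩

theorem exists_col_scaling_of_col_leaf {p : α × β} (hp : S p.1 p.2 ≠ 0)
    (hleaf : ∀ i, (i, p.2) ∈ F → i = p.1) (dr : α → G₀ˣ) (dc : β → G₀ˣ)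
    (hd : ∀ q ∈ F \ {p}, (dr q.1 : G₀) * S q.1 q.2 * dc q.2 = 1) :
    ∃ dc' : β → G₀ˣ, ∀ q ∈ F, (dr q.1 : G₀) * S q.1 q.2 * dc' q.2 = 1 := by
  refine ⟨Function.update dc p.2 (Units.mk0 _ (mul_ne_zero (dr p.1).ne_zero hp))⁻¹, ?_⟩
  rintro ⟨i, j⟩ hq
  by_cases hj : j = p.2
  · obtain rfl : (i, j) = p := Prod.ext (hleaf i (hj ▸ hq)) hj
    simp only [Function.update_self, Units.val_inv_eq_inv_val, Units.val_mk0]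
    exact mul_inv_cancel₀ (mul_ne_zero (dr i).ne_zero hp)
  · rw [Function.update_of_ne hj]
    exact hd _ ⟨hq, fun h => hj (congrArg Prod.snd h)⟩

theorem exists_units_scaling_of_not_hasBipartiteCycle (hF : F.Finite)
    (hS : ∀ p ∈ F, S p.1 p.2 ≠ 0) (hacyc : ¬ HasBipartiteCycle F) :
    ∃ (dr : α → G₀ˣ) (dc : β → G₀ˣ), ∀ p ∈ F, (dr p.1 : G₀) * S p.1 p.2 * dc p.2 = 1 := by
  induction hN : F.ncard using Nat.strong_induction_on generalizing F with
  | _ N ih =>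
    rcases F.eq_empty_or_nonempty with rfl | hne
    · exact ⟨1, 1, by simp⟩
    obtain ⟨p, hp, hleaf⟩ := exists_leaf_of_not_hasBipartiteCycle hF hne hacyc
    obtain ⟨dr, dc, hd⟩ := ih _ (hN ▸ Set.ncard_sdiff_singleton_lt_of_mem hp hF) hF.sdiff
      (fun q hq => hS q hq.1) (fun h => hacyc (h.mono Set.sdiff_subset)) rfl
    rcases hleaf with hrow | hcol
    · obtain ⟨dr', hd'⟩ := exists_row_scaling_of_row_leaf (hS p hp) hrow dr dc hd
      exact ⟨dr', dc, hd'⟩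
    · obtain ⟨dc', hd'⟩ := exists_col_scaling_of_col_leaf (hS p hp) hcol dr dc hd
      exact ⟨dr, dc', hd'⟩

end Scaling

theorem stmt17_general {k : Type*} [Field k] {n h : ℕ}
    (H : Fin h → Set (Fin n))
    (S : Matrix (Fin n) (Fin h) k) (hS : ∀ i j, S i j = 0 ↔ i ∈ H j)
    (F : Set (Fin n × Fin h)) (hF : ∀ p ∈ F, p.1 ∉ H p.2)
    (hacyc : ¬ ∃ (m : ℕ) (_ : 2 ≤ m) (a : Fin m → Fin n) (b : Fin m → Fin h),
      Function.Injective a ∧ Function.Injective b ∧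
      (∀ i, a i ∉ H (b i)) ∧ (∀ i, a (cycSucc i) ∉ H (b i)) ∧
      (∀ i, (a i, b i) ∈ F) ∧ (∀ i, (a (cycSucc i), b i) ∈ F)) :
    ∃ (dr : Fin n → kˣ) (dc : Fin h → kˣ),
      ∀ p ∈ F, (dr p.1 : k) * S p.1 p.2 * (dc p.2 : k) = 1 := by
  refine exists_units_scaling_of_not_hasBipartiteCycle F.toFinite
    (fun p hp h0 => hF p hp ((hS _ _).1 h0)) ?_
  rintro ⟨m, hm, a, b, ha, hb, hab, hab'⟩
  exact hacyc ⟨m, hm, a, b, ha, hb, fun i => hF _ (hab i), fun i => hF _ (hab' i), hab, hab'⟩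

/-- the rows and columns of a matrix with slack support can be scaled so that
all entries indexed by an acyclic set (spanning forest) equal `1`. -/
theorem stmt17 {k : Type*} [Field k] {n d h : ℕ} (M : Matroid (Fin n))
    (hE : M.E = Set.univ) (hrk : HasRank M (d + 1))
    (H : Fin h → Set (Fin n)) (hH : HypEnum M d H)
    (S : Matrix (Fin n) (Fin h) k) (hS : ∀ i j, S i j = 0 ↔ i ∈ H j)
    (F : Set (Fin n × Fin h)) (hF : ∀ p ∈ F, p.1 ∉ H p.2)
    (hacyc : ¬ ∃ (m : ℕ) (_ : 2 ≤ m) (a : Fin m → Fin n) (b : Fin m → Fin h),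
      Function.Injective a ∧ Function.Injective b ∧
      (∀ i, a i ∉ H (b i)) ∧ (∀ i, a (cycSucc i) ∉ H (b i)) ∧
      (∀ i, (a i, b i) ∈ F) ∧ (∀ i, (a (cycSucc i), b i) ∈ F)) :
    ∃ (dr : Fin n → kˣ) (dc : Fin h → kˣ),
      ∀ p ∈ F, (dr p.1 : k) * S p.1 p.2 * (dc p.2 : k) = 1 :=
  stmt17_general H S hS F hF hacyc
end
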